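/- arXiv:2210.06241 — 2 statements merged into one kernel-verified Lean document; each statement's English description precedes it below -/
import Mathlib

section
/- The Griesmer bound: for any binary linear [n, k, d] code with k ≥ 1, one has n ≥ Σ_{i=0}^{k-1} ⌈d / 2^i⌉. -/
/-- A binary linear code is self-orthogonal if all pairs of codewords have zero
inner product over `F_2`. -/
def IsSO {n : ℕ} (C : Submodule (ZMod 2) (Fin n → ZMod 2)) : Prop :=
  ∀ x ∈ C, ∀ y ∈ C, ∑ i, x i * y i = 0

/-- `C` has minimum distance exactly `d`. -/
def IsMinDist {n : ℕ} (C : Submodule (ZMod 2) (Fin n → ZMod 2)) (d : ℕ) : Prop :=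
  (∃ x ∈ C, x ≠ 0 ∧ hammingNorm x = d) ∧ ∀ x ∈ C, x ≠ 0 → d ≤ hammingNorm x

/-!
Take a nonzero codeword `x` of minimum weight `w ≥ d` and restrict the code to the coordinates
where `x` vanishes. For `y ∉ {0, x}` both `y` and `x + y` have weight at least `w`, while
`wt y + wt (x + y) = w + 2 · wt(y restricted)`; so the residual code, of length `n - w`, has
dimension `k - 1` and minimum weight at least `⌈d / 2⌉`. Induction on `k`, together with
`⌈⌈d / 2⌉ / 2^i⌉ = ⌈d / 2^(i+1)⌉`, gives the bound.
-/

open Finset Module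

lemma Nat.ceilDiv_ceilDiv (a : ℕ) {b c : ℕ} (hb : 0 < b) (hc : 0 < c) :
    a ⌈/⌉ b ⌈/⌉ c = a ⌈/⌉ (b * c) :=
  eq_of_forall_ge_iff fun x => by
    rw [ceilDiv_le_iff_le_mul hc, ceilDiv_le_iff_le_mul hb, ceilDiv_le_iff_le_mul (by positivity),
      mul_assoc]

section HammingWeight

variable {ι β : Type*} [Fintype ι] [Zero β] [DecidableEq β]

lemma card_subtype_eq_zero_add_hammingNorm (x : ι → β) :
    Fintype.card {i // x i = 0} + hammingNorm x = Fintype.card ι := by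
  rw [Fintype.card_subtype, hammingNorm]
  exact card_filter_add_card_filter_not _

lemma hammingNorm_restrict (p : ι → Prop) [DecidablePred p] (y : ι → β) :
    hammingNorm (fun j : {i // p i} => y j) = #{i | p i ∧ y i ≠ 0} := by
  rw [hammingNorm, ← Fintype.card_subtype, ← Fintype.card_subtype]
  exact Fintype.card_congr (Equiv.subtypeSubtypeEquivSubtypeInter p fun i => y i ≠ 0)

end HammingWeight

section BinaryCode

variable {ι : Type*} [Fintype ι]

lemma hammingNorm_add_hammingNorm_add (x y : ι → ZMod 2) :
    hammingNorm y + hammingNorm (x + y) =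
      hammingNorm x + 2 * hammingNorm (fun j : {i // x i = 0} => y j) := by
  rw [hammingNorm_restrict]
  simp only [hammingNorm, card_filter, mul_sum, ← sum_add_distrib, Pi.add_apply]
  refine sum_congr rfl fun i _ => ?_
  generalize x i = a, y i = b
  fin_cases a <;> fin_cases b <;> rfl

def residualCode (C : Submodule (ZMod 2) (ι → ZMod 2)) (x : ι → ZMod 2) :
    Submodule (ZMod 2) ({i // x i = 0} → ZMod 2) :=
  C.map (LinearMap.funLeft (ZMod 2) (ZMod 2) Subtype.val)

variable {C : Submodule (ZMod 2) (ι → ZMod 2)} {x : ι → ZMod 2}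

lemma exists_mem_ne_zero_hammingNorm_le (hC : C ≠ ⊥) :
    ∃ x ∈ C, x ≠ 0 ∧ ∀ y ∈ C, y ≠ 0 → hammingNorm x ≤ hammingNorm y := by
  obtain ⟨y, hy, hy0⟩ := Submodule.exists_mem_ne_zero_of_ne_bot hC
  obtain ⟨x, ⟨hx, hx0⟩, hmin⟩ :=
    (measure hammingNorm).wf.has_min {x | x ∈ C ∧ x ≠ 0} ⟨y, hy, hy0⟩
  exact ⟨x, hx, hx0, fun y hy hy0 => not_lt.mp (hmin y ⟨hy, hy0⟩)⟩

lemma hammingNorm_le_two_mul_hammingNorm_restrict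
    (hmin : ∀ y ∈ C, y ≠ 0 → hammingNorm x ≤ hammingNorm y) (hx : x ∈ C)
    {y : ι → ZMod 2} (hy : y ∈ C) (hy0 : y ≠ 0) (hyx : y ≠ x) :
    hammingNorm x ≤ 2 * hammingNorm (fun j : {i // x i = 0} => y j) := by
  have hxy : x + y ≠ 0 := fun h =>
    hyx (funext fun i => (CharTwo.add_eq_zero.mp (congrFun h i)).symm)
  have hy_wt := hmin y hy hy0
  have hxy_wt := hmin (x + y) (C.add_mem hx hy) hxy
  have hsum := hammingNorm_add_hammingNorm_add x y
  omega

lemma finrank_le_finrank_residualCode_add_one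
    (hmin : ∀ y ∈ C, y ≠ 0 → hammingNorm x ≤ hammingNorm y) (hx : x ∈ C) (hx0 : x ≠ 0) :
    finrank (ZMod 2) C ≤ finrank (ZMod 2) (residualCode C x) + 1 := by
  set φ := LinearMap.funLeft (ZMod 2) (ZMod 2) (Subtype.val : {i // x i = 0} → ι) ∘ₗ C.subtype
  have hrange : LinearMap.range φ = residualCode C x := by
    rw [LinearMap.range_comp, Submodule.range_subtype, residualCode]
  have hker : LinearMap.ker φ ≤ Submodule.span (ZMod 2) {⟨x, hx⟩} := by
    intro ⟨y, hy⟩ hφy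
    replace hφy : (fun j : {i // x i = 0} => y j) = 0 := hφy
    rw [Submodule.mem_span_singleton]
    by_cases hy0 : y = 0
    · exact ⟨0, Subtype.ext (by simp [hy0])⟩
    by_cases hyx : y = x
    · exact ⟨1, Subtype.ext (by simp [hyx])⟩
    have := hammingNorm_le_two_mul_hammingNorm_restrict hmin hx hy hy0 hyx
    rw [hφy, hammingNorm_zero] at this
    exact absurd (Nat.le_zero.mp this) (hammingNorm_ne_zero_iff.mpr hx0)
  have hx0' : (⟨x, hx⟩ : C) ≠ 0 := Subtype.coe_ne_coe.mp hx0
  have hker_rank := (Submodule.finrank_mono hker).trans_eq (finrank_span_singleton hx0')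
  have rank_nullity := LinearMap.finrank_range_add_finrank_ker φ
  rw [hrange] at rank_nullity
  omega

lemma ceilDiv_two_le_hammingNorm_of_mem_residualCode {d : ℕ}
    (hmin : ∀ y ∈ C, y ≠ 0 → hammingNorm x ≤ hammingNorm y) (hx : x ∈ C)
    (hd : d ≤ hammingNorm x) {z : {i // x i = 0} → ZMod 2} (hz : z ∈ residualCode C x)
    (hz0 : z ≠ 0) : d ⌈/⌉ 2 ≤ hammingNorm z := by
  obtain ⟨y, hy, rfl⟩ := hz
  have hy0 : y ≠ 0 := by rintro rfl; exact hz0 (map_zero _)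
  have hyx : y ≠ x := by rintro rfl; exact hz0 (funext fun j => j.2)
  rw [ceilDiv_le_iff_le_mul two_pos]
  exact hd.trans (hammingNorm_le_two_mul_hammingNorm_restrict hmin hx hy hy0 hyx)

theorem sum_ceilDiv_two_pow_le_card {k d : ℕ} (hk : k ≤ finrank (ZMod 2) C)
    (hd : ∀ x ∈ C, x ≠ 0 → d ≤ hammingNorm x) :
    ∑ i ∈ range k, d ⌈/⌉ 2 ^ i ≤ Fintype.card ι := by
  induction k generalizing ι C d with
  | zero => simp
  | succ k ih =>
    obtain ⟨x, hx, hx0, hmin⟩ :=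
      exists_mem_ne_zero_hammingNorm_le (Submodule.one_le_finrank_iff.mp (Nat.one_le_of_lt hk))
    have hres := ih (C := residualCode C x) (d := d ⌈/⌉ 2)
      (by have := finrank_le_finrank_residualCode_add_one hmin hx hx0; omega)
      (fun z hz hz0 => ceilDiv_two_le_hammingNorm_of_mem_residualCode hmin hx (hd x hx hx0) hz hz0)
    simp only [Nat.ceilDiv_ceilDiv d two_pos (Nat.two_pow_pos _), ← pow_succ'] at hres
    rw [sum_range_succ', pow_zero, ceilDiv_one]
    have hcard := card_subtype_eq_zero_add_hammingNorm x
    have hx_wt := hd x hx hx0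
    omega

end BinaryCode

theorem griesmer_bound_general (n k d : ℕ)
    (C : Submodule (ZMod 2) (Fin n → ZMod 2))
    (hdim : Module.finrank (ZMod 2) C = k) (hd : IsMinDist C d) :
    ∑ i ∈ Finset.range k, (d + 2 ^ i - 1) / 2 ^ i ≤ n := by
  simpa only [Nat.ceilDiv_eq_add_pred_div, Fintype.card_fin] using
    sum_ceilDiv_two_pow_le_card hdim.ge hd.2

/-- The Griesmer bound: any binary `[n,k,d]` code with `k ≥ 1` satisfies
`n ≥ Σ_{i=0}^{k-1} ⌈d / 2^i⌉` (the ceiling `⌈d/2^i⌉` is `(d + 2^i - 1)/2^i` in `ℕ`). -/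
theorem griesmer_bound (n k d : ℕ) (hk : 1 ≤ k)
    (C : Submodule (ZMod 2) (Fin n → ZMod 2))
    (hdim : Module.finrank (ZMod 2) C = k) (hd : IsMinDist C d) :
    ∑ i ∈ Finset.range k, (d + 2 ^ i - 1) / 2 ^ i ≤ n :=
  griesmer_bound_general n k d C hdim hd
end

section
/- If there exists a binary self-orthogonal [60, 5, 30] code, then for every m ≥ 1 there exists a binary self-orthogonal [31m + 29, 5, 16m + 14] code, and by the Griesmer bound d_{so}(31m + 29, 5) = d(31m + 29, 5) = 16m + 14. -/
/-- `d(n,k)`: the largest minimum distance among binary `[n,k]` linear codes. -/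
noncomputable def dLin (n k : ℕ) : ℕ :=
  sSup {d | ∃ C : Submodule (ZMod 2) (Fin n → ZMod 2),
    Module.finrank (ZMod 2) C = k ∧ IsMinDist C d}

/-- `d_so(n,k)`: the largest minimum distance among binary self-orthogonal `[n,k]` codes. -/
noncomputable def dSO (n k : ℕ) : ℕ :=
  sSup {d | ∃ C : Submodule (ZMod 2) (Fin n → ZMod 2),
    IsSO C ∧ Module.finrank (ZMod 2) C = k ∧ IsMinDist C d}

/-!
Appending the simplex generator matrix `S_k` (columns: the nonzero vectors of `𝔽₂ᵏ`) to a
generator matrix of a self-orthogonal `[n, k, d]` code gives a self-orthogonal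
`[n + 2ᵏ - 1, k, d + 2ᵏ⁻¹]` code once `k ≥ 3`: a nonzero message `x` is sent to the values of the
nonzero functional `v ↦ x ⬝ v`, which vanishes on exactly half of `𝔽₂ᵏ`, and
`∑_v (x ⬝ v)(y ⬝ v)` expands into sums `∑_v vᵢ vⱼ`, which cancel in pairs under translation by
a unit vector `e_l` with `l ∉ {i, j}`. Starting from the `[60, 5, 30]` code, `m - 1` steps with
`k = 5` reach `[31m + 29, 5, 16m + 14]`.

Optimality is Plotkin's averaging bound: every coordinate is nonzero on at most half of the
`2ᵏ` codewords, so `(2ᵏ - 1) d ≤ 2ᵏ⁻¹ n`; for `k = 5`, `n = 31m + 29` this forces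
`d ≤ 16m + 14`, for self-orthogonal and arbitrary linear codes alike.
-/

open Finset Matrix

theorem ZMod.two_ne_zero_iff_eq_one {a : ZMod 2} : a ≠ 0 ↔ a = 1 := by
  revert a; decide

namespace AddMonoidHom

variable {G : Type*} [AddGroup G] [Fintype G]

theorem two_mul_card_ne_zero_eq_card (f : G →+ ZMod 2) (hf : f ≠ 0) :
    2 * #{g | f g ≠ 0} = Fintype.card G := by
  obtain ⟨g₀, hg₀⟩ : ∃ g₀, f g₀ ≠ 0 := by simpa [DFunLike.ext_iff] using hf
  rw [ZMod.two_ne_zero_iff_eq_one] at hg₀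
  have hswap : #{g | f g = 0} = #{g | f g ≠ 0} := by
    refine card_nbij' (· + g₀) (· - g₀) (fun g hg => ?_) (fun g hg => ?_) (fun g _ => by simp)
      (fun g _ => by simp)
    · simp_all
    · simp only [coe_filter, mem_univ, true_and, Set.mem_ofPred_eq, map_sub] at hg ⊢
      rw [ZMod.two_ne_zero_iff_eq_one.mp hg, hg₀, sub_self]
  rw [two_mul, ← card_univ, ← card_filter_add_card_filter_not (s := univ) (fun g => f g = 0),
    hswap]

theorem two_mul_card_ne_zero_le_card (f : G →+ ZMod 2) :
    2 * #{g | f g ≠ 0} ≤ Fintype.card G := by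
  rcases eq_or_ne f 0 with rfl | hf
  · simp
  · exact (f.two_mul_card_ne_zero_eq_card hf).le

end AddMonoidHom

theorem sum_hammingNorm_eq_sum_card {α ι β : Type*} [Fintype α] [Fintype ι] [Zero β]
    [DecidableEq β] (x : α → ι → β) :
    ∑ a, hammingNorm (x a) = ∑ i, #{a | x a i ≠ 0} := by
  simp only [hammingNorm, card_filter]
  exact sum_comm

theorem Submodule.two_mul_card_sub_one_mul_le {ι : Type*} [Fintype ι]
    (C : Submodule (ZMod 2) (ι → ZMod 2)) {d : ℕ} (hd : ∀ x ∈ C, x ≠ 0 → d ≤ hammingNorm x) :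
    2 * ((Nat.card C - 1) * d) ≤ Nat.card C * Fintype.card ι := by
  classical
  rw [Nat.card_eq_fintype_card]
  have hlower : (Fintype.card C - 1) * d ≤ ∑ c : C, hammingNorm (c : ι → ZMod 2) := by
    rw [← sum_erase univ (a := (0 : C)) (by simp), ← card_univ,
      ← card_erase_of_mem (mem_univ (0 : C)), ← smul_eq_mul]
    exact card_nsmul_le_sum _ _ _ fun c hc =>
      hd c c.2 fun h => ne_of_mem_erase hc (Subtype.ext h)
  have hupper : 2 * ∑ c : C, hammingNorm (c : ι → ZMod 2) ≤ Fintype.card C * Fintype.card ι := by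
    rw [sum_hammingNorm_eq_sum_card, mul_sum, mul_comm, ← smul_eq_mul, ← card_univ,
      ← sum_const]
    exact sum_le_sum fun i _ =>
      (LinearMap.proj i ∘ₗ C.subtype).toAddMonoidHom.two_mul_card_ne_zero_le_card
  omega

theorem IsMinDist.two_mul_pow_sub_one_mul_le {n k d : ℕ}
    {C : Submodule (ZMod 2) (Fin n → ZMod 2)}
    (hd : IsMinDist C d) (hk : Module.finrank (ZMod 2) C = k) :
    2 * ((2 ^ k - 1) * d) ≤ 2 ^ k * n := by
  simpa [Module.natCard_eq_pow_finrank (K := ZMod 2), hk] using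
    C.two_mul_card_sub_one_mul_le hd.2

theorem Fintype.sum_subtype_ne_zero {V M : Type*} [Zero V] [DecidableEq V] [Fintype V]
    [AddCommMonoid M] (f : V → M) (hf : f 0 = 0) :
    ∑ v : {v : V // v ≠ 0}, f v = ∑ v, f v := by
  rw [← sum_erase univ hf, ← sum_subtype]
  simp

theorem hammingNorm_comp_equiv {ι κ β : Type*} [Fintype ι] [Fintype κ] [Zero β] [DecidableEq β]
    (x : ι → β) (e : κ ≃ ι) : hammingNorm (x ∘ e) = hammingNorm x := by
  simp only [hammingNorm, card_filter]
  exact e.sum_comp fun i => if x i ≠ 0 then 1 else 0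

theorem hammingNorm_append {n m : ℕ} {β : Type*} [Zero β] [DecidableEq β] (u : Fin n → β)
    (v : Fin m → β) : hammingNorm (Fin.append u v) = hammingNorm u + hammingNorm v := by
  simp only [hammingNorm, card_filter, Fin.sum_univ_add, Fin.append_left, Fin.append_right]

theorem Submodule.exists_injective_range_eq {K V : Type*} [Field K] [AddCommGroup V] [Module K V]
    [FiniteDimensional K V] (C : Submodule K V) {k : ℕ} (hk : Module.finrank K C = k) :
    ∃ A : (Fin k → K) →ₗ[K] V, Function.Injective A ∧ LinearMap.range A = C := by
  let e := (Module.finBasisOfFinrankEq K C hk).equivFun.symm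
  refine ⟨C.subtype ∘ₗ e.toLinearMap, C.injective_subtype.comp e.injective, ?_⟩
  rw [LinearMap.range_comp, LinearEquiv.range, Submodule.map_top, Submodule.range_subtype]

namespace LinearMap

variable {R M N : Type*} [Semiring R] [AddCommMonoid M] [Module R M] [AddCommMonoid N]
  [Module R N] {n m : ℕ}

def finAppend (A : M →ₗ[R] Fin n → N) (B : M →ₗ[R] Fin m → N) : M →ₗ[R] Fin (n + m) → N where
  toFun x := Fin.append (A x) (B x)
  map_add' x y := by
    ext i
    refine Fin.addCases (fun i => ?_) (fun i => ?_) i <;> simp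
  map_smul' c x := by
    ext i
    refine Fin.addCases (fun i => ?_) (fun i => ?_) i <;> simp

@[simp]
theorem finAppend_apply (A : M →ₗ[R] Fin n → N) (B : M →ₗ[R] Fin m → N) (x : M) :
    A.finAppend B x = Fin.append (A x) (B x) :=
  rfl

theorem finAppend_injective {A : M →ₗ[R] Fin n → N} (hA : Function.Injective A)
    (B : M →ₗ[R] Fin m → N) : Function.Injective (A.finAppend B) := fun x y h =>
  hA (funext fun i => by simpa using congrFun h (Fin.castAdd m i))

end LinearMap

section Encoder

variable {M : Type*} [AddCommGroup M] [Module (ZMod 2) M] {n : ℕ}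

theorem isSO_range_iff (E : M →ₗ[ZMod 2] Fin n → ZMod 2) :
    IsSO (LinearMap.range E) ↔ ∀ x y, ∑ i, E x i * E y i = 0 := by
  simp [IsSO]

theorem isMinDist_range_iff {E : M →ₗ[ZMod 2] Fin n → ZMod 2} (hE : Function.Injective E)
    {d : ℕ} : IsMinDist (LinearMap.range E) d ↔
      (∃ x ≠ 0, hammingNorm (E x) = d) ∧ ∀ x ≠ 0, d ≤ hammingNorm (E x) := by
  simp [IsMinDist, map_ne_zero_iff E hE]

end Encoder

def simplexGen (k : ℕ) : Matrix (Fin k) {v : Fin k → ZMod 2 // v ≠ 0} (ZMod 2) :=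
  Matrix.of fun i v => (v : Fin k → ZMod 2) i

namespace simplexGen

variable {k : ℕ}

theorem vecMul_apply (x : Fin k → ZMod 2) (v : {v : Fin k → ZMod 2 // v ≠ 0}) :
    (x ᵥ* simplexGen k) v = x ⬝ᵥ v :=
  rfl

theorem card_cols : Fintype.card {v : Fin k → ZMod 2 // v ≠ 0} = 2 ^ k - 1 := by
  simp [Fintype.card_subtype_compl]

theorem two_mul_hammingNorm_vecMul {x : Fin k → ZMod 2} (hx : x ≠ 0) :
    2 * hammingNorm (x ᵥ* simplexGen k) = 2 ^ k := by
  let f : (Fin k → ZMod 2) →+ ZMod 2 := AddMonoidHom.mk' (x ⬝ᵥ ·) (dotProduct_add x)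
  have hf : f ≠ 0 := by
    obtain ⟨i, hi⟩ := Function.ne_iff.mp hx
    refine DFunLike.ne_iff.mpr ⟨Pi.single i 1, ?_⟩
    simpa [f, dotProduct_single] using hi
  have hweight : hammingNorm (x ᵥ* simplexGen k) = #{v | f v ≠ 0} := by
    rw [hammingNorm, card_filter, card_filter]
    exact Fintype.sum_subtype_ne_zero (fun v => if x ⬝ᵥ v ≠ 0 then 1 else 0) (by simp)
  rw [hweight, f.two_mul_card_ne_zero_eq_card hf]
  simp

theorem sum_mul_apply_eq_zero (hk : 3 ≤ k) (i j : Fin k) :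
    ∑ v : Fin k → ZMod 2, v i * v j = 0 := by
  obtain ⟨l, -, hl⟩ := exists_mem_notMem_of_card_lt_card (s := {i, j}) (t := univ)
    (card_le_two.trans_lt (show 2 < #(univ : Finset (Fin k)) by simp; omega))
  obtain ⟨hli, hlj⟩ : l ≠ i ∧ l ≠ j := by simpa [not_or] using hl
  refine sum_ninvolution (· + Pi.single l 1) (fun v => ?_) (fun v _ => ?_) (fun v => mem_univ _)
    (fun v => ?_)
  · simp [hli.symm, hlj.symm, CharTwo.add_self_eq_zero]
  · simp
  · simp [add_assoc, ← Pi.single_add, CharTwo.add_self_eq_zero]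

theorem sum_vecMul_mul_vecMul (hk : 3 ≤ k) (x y : Fin k → ZMod 2) :
    ∑ v, (x ᵥ* simplexGen k) v * (y ᵥ* simplexGen k) v = 0 := by
  simp only [vecMul_apply]
  rw [Fintype.sum_subtype_ne_zero (fun v => x ⬝ᵥ v * y ⬝ᵥ v) (by simp)]
  calc ∑ v : Fin k → ZMod 2, x ⬝ᵥ v * y ⬝ᵥ v
      = ∑ i, ∑ j, x i * y j * ∑ v : Fin k → ZMod 2, v i * v j := by
        simp only [dotProduct, sum_mul, mul_sum]
        rw [sum_comm_cycle]
        refine sum_congr rfl fun i _ => ?_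
        rw [sum_comm]
        exact sum_congr rfl fun j _ => sum_congr rfl fun v _ => by ring
    _ = 0 := by simp [sum_mul_apply_eq_zero hk]

theorem hammingNorm_vecMul {x : Fin k → ZMod 2} (hx : x ≠ 0) :
    hammingNorm (x ᵥ* simplexGen k) = 2 ^ (k - 1) := by
  obtain ⟨k, rfl⟩ : ∃ k', k = k' + 1 :=
    Nat.exists_eq_succ_of_ne_zero fun hk => hx (by subst hk; exact Subsingleton.elim _ _)
  have := two_mul_hammingNorm_vecMul hx
  rw [pow_succ] at this
  rw [Nat.add_sub_cancel]
  omega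

end simplexGen

theorem IsSO.exists_finAppend {n m k d w : ℕ} {C : Submodule (ZMod 2) (Fin n → ZMod 2)}
    (hC : IsSO C) (hk : Module.finrank (ZMod 2) C = k) (hd : IsMinDist C d)
    (B : (Fin k → ZMod 2) →ₗ[ZMod 2] Fin m → ZMod 2) (hB : ∀ x y, ∑ j, B x j * B y j = 0)
    (hw : ∀ x ≠ 0, hammingNorm (B x) = w) :
    ∃ C' : Submodule (ZMod 2) (Fin (n + m) → ZMod 2),
      IsSO C' ∧ Module.finrank (ZMod 2) C' = k ∧ IsMinDist C' (d + w) := by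
  obtain ⟨A, hA, rfl⟩ := C.exists_injective_range_eq hk
  rw [isSO_range_iff] at hC
  rw [isMinDist_range_iff hA] at hd
  have hE := LinearMap.finAppend_injective hA B
  have hweight : ∀ x ≠ 0, hammingNorm (A.finAppend B x) = hammingNorm (A x) + w := fun x hx => by
    rw [LinearMap.finAppend_apply, hammingNorm_append, hw x hx]
  obtain ⟨⟨x₀, hx₀, hdx₀⟩, hdle⟩ := hd
  refine ⟨LinearMap.range (A.finAppend B), (isSO_range_iff _).2 fun x y => ?_, ?_,
    (isMinDist_range_iff hE).2 ⟨⟨x₀, hx₀, by rw [hweight x₀ hx₀, hdx₀]⟩, fun x hx => ?_⟩⟩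
  · simp [Fin.sum_univ_add, hC, hB]
  · simp [LinearMap.finrank_range_of_inj hE]
  · rw [hweight x hx]
    exact Nat.add_le_add_right (hdle x hx) w

theorem IsSO.exists_finAppend_simplex {n k d : ℕ} (hk3 : 3 ≤ k)
    {C : Submodule (ZMod 2) (Fin n → ZMod 2)} (hC : IsSO C) (hk : Module.finrank (ZMod 2) C = k)
    (hd : IsMinDist C d) :
    ∃ C' : Submodule (ZMod 2) (Fin (n + (2 ^ k - 1)) → ZMod 2),
      IsSO C' ∧ Module.finrank (ZMod 2) C' = k ∧ IsMinDist C' (d + 2 ^ (k - 1)) := by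
  let e := (Fintype.equivFinOfCardEq (simplexGen.card_cols (k := k))).symm
  refine hC.exists_finAppend hk hd
    (LinearMap.funLeft (ZMod 2) (ZMod 2) e ∘ₗ (simplexGen k).vecMulLinear)
    (fun x y => ?_) (fun x hx => ?_)
  · simpa [LinearMap.funLeft] using
      (e.sum_comp fun v => (x ᵥ* simplexGen k) v * (y ᵥ* simplexGen k) v).trans
        (simplexGen.sum_vecMul_mul_vecMul hk3 x y)
  · simpa [LinearMap.funLeft, hammingNorm_comp_equiv] using simplexGen.hammingNorm_vecMul hx

theorem dSO_eq {n k d : ℕ}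
    (hC : ∃ C : Submodule (ZMod 2) (Fin n → ZMod 2),
      IsSO C ∧ Module.finrank (ZMod 2) C = k ∧ IsMinDist C d)
    (hle : ∀ (C : Submodule (ZMod 2) (Fin n → ZMod 2)) (d' : ℕ),
      Module.finrank (ZMod 2) C = k → IsMinDist C d' → d' ≤ d) :
    dSO n k = d :=
  IsGreatest.csSup_eq ⟨hC, fun _ ⟨C, _, hk, hd⟩ => hle C _ hk hd⟩

theorem dLin_eq {n k d : ℕ}
    (hC : ∃ C : Submodule (ZMod 2) (Fin n → ZMod 2), Module.finrank (ZMod 2) C = k ∧ IsMinDist C d)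
    (hle : ∀ (C : Submodule (ZMod 2) (Fin n → ZMod 2)) (d' : ℕ),
      Module.finrank (ZMod 2) C = k → IsMinDist C d' → d' ≤ d) :
    dLin n k = d :=
  IsGreatest.csSup_eq ⟨hC, fun _ ⟨C, hk, hd⟩ => hle C _ hk hd⟩

/-- If there exists a binary self-orthogonal `[60, 5, 30]` code, then for every `m ≥ 1`
there exists a binary self-orthogonal `[31m + 29, 5, 16m + 14]` code; combined with the
Griesmer bound, `d_so(31m + 29, 5) = d(31m + 29, 5) = 16m + 14`. -/
theorem dso_31m29 
    (h : ∃ C : Submodule (ZMod 2) (Fin 60 → ZMod 2),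
      IsSO C ∧ Module.finrank (ZMod 2) C = 5 ∧ IsMinDist C 30) :
    ∀ m : ℕ, 1 ≤ m →
      (∃ C : Submodule (ZMod 2) (Fin (31 * m + 29) → ZMod 2),
        IsSO C ∧ Module.finrank (ZMod 2) C = 5 ∧ IsMinDist C (16 * m + 14)) ∧
      dSO (31 * m + 29) 5 = 16 * m + 14 ∧ dLin (31 * m + 29) 5 = 16 * m + 14 := by
  have hcode : ∀ m, 1 ≤ m → ∃ C : Submodule (ZMod 2) (Fin (31 * m + 29) → ZMod 2),
      IsSO C ∧ Module.finrank (ZMod 2) C = 5 ∧ IsMinDist C (16 * m + 14) := by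
    intro m hm
    induction m, hm using Nat.le_induction with
    | base => exact h
    | succ m _ ih =>
      obtain ⟨C, hC, hk, hd⟩ := ih
      rw [show 31 * (m + 1) + 29 = 31 * m + 29 + (2 ^ 5 - 1) by omega,
        show 16 * (m + 1) + 14 = 16 * m + 14 + 2 ^ (5 - 1) by omega]
      exact hC.exists_finAppend_simplex (by norm_num) hk hd
  intro m hm
  obtain ⟨C, hC, hk, hd⟩ := hcode m hm
  have hle : ∀ (D : Submodule (ZMod 2) (Fin (31 * m + 29) → ZMod 2)) (d : ℕ),
      Module.finrank (ZMod 2) D = 5 → IsMinDist D d → d ≤ 16 * m + 14 := fun D d hk hd => by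
    have := hd.two_mul_pow_sub_one_mul_le hk
    norm_num at this
    omega
  exact ⟨⟨C, hC, hk, hd⟩, dSO_eq ⟨C, hC, hk, hd⟩ hle, dLin_eq ⟨C, hk, hd⟩ hle⟩
end
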